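/- Assume Σ contains at least two letters and f : Σ* → Σ* is RCP. If there exists a word u ≠ ε such that f(u) = ε, then f is constant on Σ* with value ε. -/

import Mathlib

/-! Every map `φ` used below is an endomorphism of the free monoid, so for an RCP function `f`,
`φ x = φ y` and `f y = ε` force `φ (f x) = ε`.
Taking for `φ` the map collapsing every letter to `a` shows that `f x = ε` as soon as `f` vanishes
at some word of length `|x|`; hence `f` vanishes on words of length `n = |u|`, and it suffices to
show `f (aᵐ) = ε` for every `m`. For `m ≥ n`, the nonerasing substitution `b ↦ a^(m-n+1)`
identifies `aᵐ` with `a^(n-1) b`. For `m ≤ n`, deleting the letters other than `a` identifies `aᵐ`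
with `aᵐ b^(n-m)`, so `f (aᵐ)` contains no `a`, while deleting `a` identifies `aᵐ` with `aⁿ`, so
`f (aᵐ)` contains nothing but `a`. -/

/-- A congruence on the free monoid `List S`: an equivalence relation compatible
with concatenation. -/
def IsCong {S : Type*} (r : List S → List S → Prop) : Prop :=
  Equivalence r ∧ ∀ x y u v : List S, r x y → r u v → r (x ++ u) (y ++ v)

/-- A monoid homomorphism from the free monoid `List S` to itself. -/
def IsHom {S : Type*} (φ : List S → List S) : Prop :=
  φ [] = [] ∧ ∀ x y : List S, φ (x ++ y) = φ x ++ φ y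

/-- `f` is congruence preserving. -/
def IsCP {S : Type*} (f : List S → List S) : Prop :=
  ∀ r : List S → List S → Prop, IsCong r → ∀ x y : List S, r x y → r (f x) (f y)

/-- `f` preserves all restricted congruences (kernels of endomorphisms of the free monoid). -/
def IsRCP {S : Type*} (f : List S → List S) : Prop :=
  ∀ φ : List S → List S, IsHom φ → ∀ x y : List S, φ x = φ y → φ (f x) = φ (f y)

/-- `f x = w₀ x w₁ x ⋯ x wₙ` for fixed words `w₀, …, wₙ`. -/
def PolyForm {S : Type*} (f : List S → List S) : Prop :=
  ∃ (n : ℕ) (w : ℕ → List S), ∀ x : List S,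
    f x = w 0 ++ List.flatten ((List.range n).map fun i => x ++ w (i + 1))
theorem isHom_flatMap {S : Type*} (g : S → List S) : IsHom (List.flatMap g) :=
  ⟨List.flatMap_nil, fun _ _ => List.flatMap_append⟩

theorem isHom_map {S : Type*} (g : S → S) : IsHom (List.map g) :=
  ⟨List.map_nil, fun _ _ => List.map_append⟩

theorem isHom_filter {S : Type*} (p : S → Bool) : IsHom (List.filter p) :=
  ⟨List.filter_nil, List.filter_append⟩

namespace IsRCP

variable {S : Type*} {f : List S → List S}

theorem apply_eq_nil (hf : IsRCP f) {φ : List S → List S} (hφ : IsHom φ) {x y : List S}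
    (hxy : φ x = φ y) (hy : f y = []) : φ (f x) = [] := by
  rw [hf φ hφ x y hxy, hy, hφ.1]

theorem eq_nil_of_length_eq (hf : IsRCP f) (a : S) {x y : List S}
    (hxy : x.length = y.length) (hy : f y = []) : f x = [] := by
  have : (f x).map (fun _ => a) = [] :=
    hf.apply_eq_nil (isHom_map fun _ => a) (by rw [List.map_const', List.map_const', hxy]) hy
  exact List.map_eq_nil_iff.1 this

theorem eq_nil_of_flatMap_eq (hf : IsRCP f) {g : S → List S} (hg : ∀ c, g c ≠ [])
    {x y : List S} (hxy : x.flatMap g = y.flatMap g) (hy : f y = []) : f x = [] := by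
  have := List.flatMap_eq_nil_iff.1 (hf.apply_eq_nil (isHom_flatMap g) hxy hy)
  exact List.eq_nil_iff_forall_not_mem.2 fun c hc => hg c (this c hc)

theorem forall_not_of_filter_eq (hf : IsRCP f) {p : S → Bool} {x y : List S}
    (hxy : x.filter p = y.filter p) (hy : f y = []) : ∀ c ∈ f x, ¬p c :=
  List.filter_eq_nil_iff.1 (hf.apply_eq_nil (isHom_filter p) hxy hy)

variable {n : ℕ} {a b : S}

theorem apply_replicate_eq_nil_of_le [DecidableEq S] (hf : IsRCP f) (hab : a ≠ b) (hn : 0 < n)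
    (hvanish : ∀ w : List S, w.length = n → f w = []) {m : ℕ} (hnm : n ≤ m) :
    f (List.replicate m a) = [] := by
  let g : S → List S := fun c => if c = b then List.replicate (m - n + 1) a else [c]
  have hg : ∀ c, g c ≠ [] := fun c => by by_cases h : c = b <;> simp [g, h]
  have hga : ∀ k, (List.replicate k a).flatMap g = List.replicate k a := fun k => by
    simp [List.flatMap_replicate, g, hab, List.flatten_replicate_singleton]
  refine hf.eq_nil_of_flatMap_eq hg (y := List.replicate (n - 1) a ++ [b]) ?_ (hvanish _ ?_)
  · rw [hga, List.flatMap_append, hga, List.flatMap_singleton, show g b = _ from if_pos rfl,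
      ← List.replicate_add]
    congr 1
    omega
  · rw [List.length_append, List.length_replicate, List.length_singleton]
    omega

theorem apply_replicate_eq_nil_of_ge [DecidableEq S] (hf : IsRCP f) (hab : a ≠ b)
    (hvanish : ∀ w : List S, w.length = n → f w = []) {m : ℕ} (hmn : m ≤ n) :
    f (List.replicate m a) = [] := by
  have only_a : ∀ c ∈ f (List.replicate m a), c = a := by
    simpa using hf.forall_not_of_filter_eq (p := fun c => c ≠ a) (y := List.replicate n a)
      (by simp) (hvanish _ List.length_replicate)
  have no_a : ∀ c ∈ f (List.replicate m a), c ≠ a := by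
    simpa using hf.forall_not_of_filter_eq (p := fun c => c = a)
      (y := List.replicate m a ++ List.replicate (n - m) b)
      (by simp [List.filter_append, hab.symm]) (hvanish _ (by simpa using Nat.add_sub_cancel' hmn))
  exact List.eq_nil_iff_forall_not_mem.2 fun c hc => no_a c hc (only_a c hc)

end IsRCP

/-- If `S` has at least two letters, `f` is RCP, and `f u = ε` for some `u ≠ ε`,
then `f` is constantly `ε`. -/
theorem stmt_8 {S : Type*} (hS : ∃ a b : S, a ≠ b) (f : List S → List S) (hf : IsRCP f)
    (u : List S) (hu : u ≠ []) (hfu : f u = []) : ∀ x : List S, f x = [] := by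
  classical
  obtain ⟨a, b, hab⟩ := hS
  have hvanish : ∀ w : List S, w.length = u.length → f w = [] :=
    fun w hw => hf.eq_nil_of_length_eq a hw hfu
  intro x
  refine hf.eq_nil_of_length_eq a (y := List.replicate x.length a) List.length_replicate.symm ?_
  rcases le_total u.length x.length with hle | hge
  · exact hf.apply_replicate_eq_nil_of_le hab (List.length_pos_iff.2 hu) hvanish hle
  · exact hf.apply_replicate_eq_nil_of_ge hab hvanish hge
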